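/- arXiv:1001.2256 — 7 statements merged into one kernel-verified Lean document; each statement's English description precedes it below -/
import Mathlib

section
/- For all lists A, B of integers and every integer a, d(A ++ (a :: B)) = a · d(A) · d(B) − d'(A.reverse) · d(B) − d(A) · d'(B). (This is the determinant expansion of Lemma 2.1 of the paper, specialized to a chain, at the component corresponding to the entry a.) -/
/-- The discriminant `d(L)` of a chain with weight list `L`, defined by the recursion
`d([]) = 1`, `d([a]) = a`, `d(a :: b :: L') = a * d(b :: L') - d(L')`. -/
def disc : List ℤ → ℤ
  | [] => 1
  | [a] => a
  | a :: b :: L => a * disc (b :: L) - disc L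

/-- `d'(L) = d(L.tail)` for nonempty `L`, and `d'([]) = 0`. -/
def disc' : List ℤ → ℤ
  | [] => 0
  | _ :: L => disc L

/-- Auxiliary: `disc` of the list with the last element dropped (and `0` on `[]`). -/
def dd : List ℤ → ℤ
  | [] => 0
  | a :: L => disc ((a :: L).dropLast)

lemma disc_cons (x : ℤ) (B : List ℤ) : disc (x :: B) = x * disc B - disc' B := by
  cases B with
  | nil => simp [disc, disc']
  | cons b L => rfl

lemma dd_cons_cons (x y : ℤ) (A : List ℤ) :
    dd (x :: y :: A) = x * dd (y :: A) - dd A := by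
  cases A with
  | nil => simp [dd, disc]
  | cons c C =>
    show disc (x :: y :: (c :: C).dropLast) = _
    rw [disc]
    rfl

lemma disc_concat (x : ℤ) : ∀ M : List ℤ, disc (M ++ [x]) = x * disc M - dd M := by
  intro M
  induction M using disc.induct with
  | case1 => simp [disc, dd]
  | case2 m => simp [disc, dd]; ring
  | case3 m₁ m₂ M ih1 ih2 =>
    show disc (m₁ :: m₂ :: (M ++ [x])) = _
    rw [disc]
    have : m₂ :: (M ++ [x]) = (m₂ :: M) ++ [x] := rfl
    rw [this, ih1, ih2, dd_cons_cons, disc]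
    ring

lemma disc_reverse_aux : ∀ n (M : List ℤ), M.length ≤ n → disc M.reverse = disc M := by
  intro n
  induction n with
  | zero => intro M hM; rw [List.length_eq_zero_iff.mp (Nat.le_zero.mp hM)]; rfl
  | succ n ih =>
    intro M hn
    cases M with
    | nil => rfl
    | cons x M =>
      have h1 : disc M.reverse = disc M := ih M (by simp at hn; omega)
      have h2 : disc M.tail.reverse = disc M.tail := by
        refine ih M.tail ?_
        simp [List.length_tail] at hn ⊢; omega
      have hd : dd M.reverse = disc' M := by
        cases M with
        | nil => rfl
        | cons y L =>
          have hne : (y :: L).reverse ≠ [] := by simp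
          obtain ⟨c, C, hC⟩ := List.exists_cons_of_ne_nil hne
          show dd ((y :: L).reverse) = disc L
          rw [hC]
          show disc ((c :: C).dropLast) = disc L
          rw [← hC, List.dropLast_reverse]
          simpa using h2
      rw [List.reverse_cons, disc_concat, hd, h1, disc_cons]

lemma disc_reverse (M : List ℤ) : disc M.reverse = disc M :=
  disc_reverse_aux M.length M le_rfl

lemma disc'_reverse (A : List ℤ) : disc' A.reverse = dd A := by
  cases A with
  | nil => rfl
  | cons x M =>
    have hne : (x :: M).reverse ≠ [] := by simp
    obtain ⟨c, C, hC⟩ := List.exists_cons_of_ne_nil hne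
    show disc' ((x :: M).reverse) = disc ((x :: M).dropLast)
    rw [hC]
    show disc C = _
    have : C = (x :: M).reverse.tail := by rw [hC]; rfl
    rw [this, List.tail_reverse, disc_reverse]

theorem disc_append_cons (A : List ℤ) (a : ℤ) (B : List ℤ) :
    disc (A ++ a :: B) =
      a * disc A * disc B - disc' A.reverse * disc B - disc A * disc' B := by
  induction A using disc.induct with
  | case1 => simp [disc, disc', disc_cons]
  | case2 x =>
    show disc (x :: a :: B) = _
    rw [disc, disc_cons]
    have h1 : disc' ([x].reverse) = 1 := rfl
    have h3 : disc' (a :: B) = disc B := rfl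
    rw [h1, h3, disc_cons]
    ring
  | case3 x y A ih1 ih2 =>
    show disc (x :: y :: (A ++ a :: B)) = _
    rw [disc]
    have h1 : y :: (A ++ a :: B) = (y :: A) ++ a :: B := rfl
    rw [h1, ih1, ih2, disc'_reverse, disc'_reverse, disc'_reverse, dd_cons_cons, disc]
    ring
end

section
/- Let L = [a_1, …, a_n] be an admissible list (every a_i ≥ 2) and let M(L) be the associated symmetric tridiagonal matrix. Then M(L) is positive definite. (Equivalently: the intersection matrix of an admissible chain of rational curves is negative definite.) -/
/-- The symmetric tridiagonal matrix `M(L)` over `ℚ` associated to a list `L = [a₁, …, aₙ]`: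
diagonal entries `aᵢ`, entries `-1` on the sub- and super-diagonal, and `0` elsewhere. -/
def chainMatrix (L : List ℤ) : Matrix (Fin L.length) (Fin L.length) ℚ :=
  Matrix.of fun i j =>
    if i = j then (L.get i : ℚ)
    else if (i : ℕ) + 1 = (j : ℕ) ∨ (j : ℕ) + 1 = (i : ℕ) then -1
    else 0

/-- The quadratic form of a chain, defined recursively on the list. -/
def qform : List ℤ → (ℕ → ℚ) → ℚ
  | [], _ => 0
  | a :: L, y => (a : ℚ) * y 0 ^ 2 - 2 * y 0 * y 1 + qform L (fun i => y (i + 1))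

/-- Extension of a finitely supported vector by zero. -/
def extVec (L : List ℤ) (x : Fin L.length → ℚ) : ℕ → ℚ :=
  fun i => if h : i < L.length then x ⟨i, h⟩ else 0

lemma qform_bound (L : List ℤ) (hL : ∀ a ∈ L, 2 ≤ a) (y : ℕ → ℚ)
    (hy : ∀ i, L.length ≤ i → y i = 0) :
    (y 0) ^ 2 ≤ qform L y ∧ ((∃ i, y i ≠ 0) → (y 0) ^ 2 < qform L y) := by
  induction L generalizing y with
  | nil =>
      have h0 : ∀ i, y i = 0 := fun i => hy i (Nat.zero_le i)
      constructor
      · simp [qform, h0 0]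
      · rintro ⟨i, hi⟩; exact absurd (h0 i) hi
  | cons a L ih =>
      have ha : (2 : ℚ) ≤ (a : ℚ) := by exact_mod_cast hL a (by simp)
      have hy' : ∀ i, L.length ≤ i → y (i + 1) = 0 := by
        intro i hi
        exact hy (i + 1) (by simpa using Nat.succ_le_succ hi)
      obtain ⟨h1, h2⟩ := ih (fun b hb => hL b (by simp [hb])) (fun i => y (i + 1)) hy'
      constructor
      · show (y 0) ^ 2 ≤ (a : ℚ) * y 0 ^ 2 - 2 * y 0 * y 1 + qform L (fun i => y (i + 1))
        nlinarith [sq_nonneg (y 0 - y 1), sq_nonneg (y 0), h1]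
      · rintro ⟨i, hi⟩
        show (y 0) ^ 2 < (a : ℚ) * y 0 ^ 2 - 2 * y 0 * y 1 + qform L (fun i => y (i + 1))
        by_cases hshift : ∃ j, y (j + 1) ≠ 0
        · have h2' := h2 hshift
          nlinarith [sq_nonneg (y 0 - y 1), sq_nonneg (y 0)]
        · push_neg at hshift
          have hy1 : y 1 = 0 := hshift 0
          have hy0 : y 0 ≠ 0 := by
            rcases i with _ | i
            · exact hi
            · exact absurd (hshift i) hi
          have hpos : 0 < (y 0) ^ 2 := by positivity
          have hmul : 2 * (y 0) ^ 2 ≤ (a : ℚ) * (y 0) ^ 2 :=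
            mul_le_mul_of_nonneg_right ha (sq_nonneg _)
          have hq0 : 0 ≤ qform L (fun i => y (i + 1)) := by
            have h1' := h1
            rw [show (0:ℕ)+1 = 1 from rfl, hy1] at h1'
            simpa using h1'
          rw [hy1]
          linarith

lemma cm_zero_zero (a : ℤ) (L : List ℤ) :
    chainMatrix (a :: L) (0 : Fin (L.length + 1)) (0 : Fin (L.length + 1)) = (a : ℚ) := by
  simp [chainMatrix]

lemma cm_zero_succ (a : ℤ) (L : List ℤ) (j : Fin L.length) :
    chainMatrix (a :: L) (0 : Fin (L.length + 1)) j.succ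
      = if (j : ℕ) = 0 then -1 else 0 := by
  simp only [chainMatrix, Matrix.of_apply]
  rw [if_neg (by simp [Fin.ext_iff])]
  by_cases h : (j : ℕ) = 0
  · rw [if_pos (by simp [Fin.val_succ, h]), if_pos h]
  · rw [if_neg (by simp [Fin.val_succ]; omega), if_neg h]

lemma cm_succ_zero (a : ℤ) (L : List ℤ) (i : Fin L.length) :
    chainMatrix (a :: L) i.succ (0 : Fin (L.length + 1))
      = if (i : ℕ) = 0 then -1 else 0 := by
  simp only [chainMatrix, Matrix.of_apply]
  rw [if_neg (by simp [Fin.ext_iff])]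
  by_cases h : (i : ℕ) = 0
  · rw [if_pos (by simp [Fin.val_succ, h]), if_pos h]
  · rw [if_neg (by simp [Fin.val_succ]; omega), if_neg h]

lemma cm_succ_succ (a : ℤ) (L : List ℤ) (i j : Fin L.length) :
    chainMatrix (a :: L) i.succ j.succ = chainMatrix L i j := by
  simp only [chainMatrix, Matrix.of_apply, Fin.succ_inj, Fin.val_succ, add_left_inj,
    List.get_eq_getElem, List.getElem_cons_succ]

lemma extVec_succ (a : ℤ) (L : List ℤ) (x : Fin (a :: L).length → ℚ) (i : ℕ) :
    extVec (a :: L) x (i + 1) = extVec L (x ∘ Fin.succ) i := by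
  simp only [extVec, List.length_cons]
  by_cases h : i < L.length
  · rw [dif_pos (Nat.succ_lt_succ h), dif_pos h]
    rfl
  · rw [dif_neg (by omega), dif_neg h]

open Matrix in
lemma expand_quad (n : ℕ) (N : Matrix (Fin (n + 1)) (Fin (n + 1)) ℚ) (v : Fin (n + 1) → ℚ) :
    v ⬝ᵥ N *ᵥ v = v 0 * (N 0 0 * v 0)
      + v 0 * (∑ j : Fin n, N 0 j.succ * v j.succ)
      + (∑ i : Fin n, v i.succ * (N i.succ 0 * v 0))
      + ∑ i : Fin n, v i.succ * (∑ j : Fin n, N i.succ j.succ * v j.succ) := by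
  simp only [dotProduct, Matrix.mulVec, Fin.sum_univ_succ, mul_add,
    Finset.sum_add_distrib]
  ring

lemma sum_ite_zero (n : ℕ) (f : Fin n → ℚ) :
    ∑ i : Fin n, (if (i : ℕ) = 0 then (-1 : ℚ) else 0) * f i
      = -(if h : 0 < n then f ⟨0, h⟩ else 0) := by
  rcases n with _ | m
  · simp
  · rw [Fin.sum_univ_succ, dif_pos (Nat.succ_pos m)]
    simp

lemma sum_ite_zero' (n : ℕ) (f : Fin n → ℚ) (c : ℚ) :
    ∑ i : Fin n, f i * ((if (i : ℕ) = 0 then (-1 : ℚ) else 0) * c)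
      = -((if h : 0 < n then f ⟨0, h⟩ else 0) * c) := by
  rcases n with _ | m
  · simp
  · rw [Fin.sum_univ_succ, dif_pos (Nat.succ_pos m)]
    simp

open Matrix in
lemma dot_eq_qform (L : List ℤ) (x : Fin L.length → ℚ) :
    x ⬝ᵥ chainMatrix L *ᵥ x = qform L (extVec L x) := by
  induction L with
  | nil => simp [qform, dotProduct]
  | cons a L ih =>
      have key := expand_quad L.length (chainMatrix (a :: L)) x
      have h0 : extVec (a :: L) x 0 = x (0 : Fin (L.length + 1)) := by
        simp only [extVec, List.length_cons]
        rw [dif_pos (Nat.succ_pos _)]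
        rfl
      have hext1 : extVec (a :: L) x 1
          = (if h : 0 < L.length then x (Fin.succ ⟨0, h⟩) else 0) := by
        simp only [extVec, List.length_cons]
        by_cases h : 0 < L.length
        · rw [dif_pos (by omega), dif_pos h]
          rfl
        · rw [dif_neg (by omega), dif_neg h]
      have hfun : (fun i => extVec (a :: L) x (i + 1)) = extVec L (x ∘ Fin.succ) :=
        funext (extVec_succ a L x)
      have hq : qform (a :: L) (extVec (a :: L) x) =
          (a : ℚ) * (x (0 : Fin (L.length + 1))) ^ 2
            - 2 * x (0 : Fin (L.length + 1))
                * (if h : 0 < L.length then x (Fin.succ ⟨0, h⟩) else 0)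
            + qform L (extVec L (x ∘ Fin.succ)) := by
        simp only [qform, hfun, h0, hext1]
      have hsum4 : ∑ i : Fin L.length, x i.succ *
            (∑ j : Fin L.length, chainMatrix (a :: L) i.succ j.succ * x j.succ)
          = (x ∘ Fin.succ) ⬝ᵥ chainMatrix L *ᵥ (x ∘ Fin.succ) := by
        simp only [cm_succ_succ, dotProduct, Matrix.mulVec, Function.comp_apply]
      rw [key, hq, ← ih (x ∘ Fin.succ), ← hsum4, cm_zero_zero]
      simp only [cm_zero_succ, cm_succ_zero, sum_ite_zero, sum_ite_zero']
      ring

theorem chainMatrix_posDef_of_admissible (L : List ℤ) (hL : ∀ a ∈ L, 2 ≤ a) :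
    (chainMatrix L).PosDef := by
  rw [Matrix.posDef_iff_dotProduct_mulVec]
  constructor
  · rw [Matrix.IsHermitian]
    ext i j
    simp only [chainMatrix, Matrix.conjTranspose_apply, Matrix.of_apply, star_trivial]
    by_cases h : i = j
    · subst h; simp
    · rw [if_neg (fun hji => h hji.symm), if_neg h]
      by_cases hc : (i : ℕ) + 1 = (j : ℕ) ∨ (j : ℕ) + 1 = (i : ℕ)
      · rw [if_pos hc.symm, if_pos hc]
      · rw [if_neg (fun hcs => hc hcs.symm), if_neg hc]
  · intro x hx
    rw [star_trivial, dot_eq_qform]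
    have hy : ∀ i, L.length ≤ i → extVec L x i = 0 := by
      intro i hi
      simp [extVec, Nat.not_lt.mpr hi]
    obtain ⟨h1, h2⟩ := qform_bound L hL (extVec L x) hy
    have hex : ∃ i, extVec L x i ≠ 0 := by
      have hxx : ∃ j : Fin L.length, x j ≠ 0 := by
        by_contra hc
        push_neg at hc
        exact hx (funext hc)
      obtain ⟨j, hj⟩ := hxx
      refine ⟨j, ?_⟩
      simpa [extVec, j.isLt] using hj
    calc (0 : ℚ) ≤ (extVec L x 0) ^ 2 := sq_nonneg _
      _ < qform L (extVec L x) := h2 hex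
end

section
/- For every admissible list L (every entry ≥ 2), d(L) ≥ length(L) + 1, and equality holds if and only if every entry of L equals 2. -/
lemma disc_all2 : ∀ L : List ℤ, (∀ a ∈ L, a = 2) → disc L = (L.length : ℤ) + 1
  | [], _ => by simp [disc]
  | [a], h => by simp [disc, h a (by simp)]
  | a :: b :: M, h => by
    have ha : a = 2 := h a (by simp)
    have h1 : disc (b :: M) = ((b :: M).length : ℤ) + 1 :=
      disc_all2 (b :: M) (fun x hx => h x (by simp [hx]))
    have h2 : disc M = (M.length : ℤ) + 1 :=
      disc_all2 M (fun x hx => h x (by simp [hx]))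
    simp only [disc, ha, h1, h2, List.length_cons]
    push_cast
    ring

lemma disc_key : ∀ L : List ℤ, (∀ a ∈ L, 2 ≤ a) →
    ((L.length : ℤ) + 1 ≤ disc L ∧ ∀ c : ℤ, 2 ≤ c → disc L + 1 ≤ disc (c :: L)) ∧
      ((∃ a ∈ L, a ≠ 2) → (L.length : ℤ) + 2 ≤ disc L)
  | [], _ => by
    refine ⟨⟨by simp [disc], fun c hc => ?_⟩, by simp⟩
    show (1:ℤ) + 1 ≤ c
    omega
  | [a], h => by
    have ha := h a (by simp)
    refine ⟨⟨?_, fun c hc => ?_⟩, ?_⟩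
    · simp only [disc, List.length_cons, List.length_nil]; omega
    · show a + 1 ≤ c * a - 1
      nlinarith
    · rintro ⟨x, hx, hx2⟩
      simp only [List.mem_singleton] at hx
      subst hx
      simp only [disc, List.length_cons, List.length_nil]
      omega
  | a :: b :: M, h => by
    have ha : 2 ≤ a := h a (by simp)
    have hb : 2 ≤ b := h b (by simp)
    obtain ⟨⟨hD1, hDc⟩, hDs⟩ := disc_key (b :: M) (fun x hx => h x (by simp [hx]))
    obtain ⟨⟨hd1, hdc⟩, _⟩ := disc_key M (fun x hx => h x (by simp [hx]))
    have hmd : disc M + 1 ≤ disc (b :: M) := hdc b hb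
    have hdisc : disc (a :: b :: M) = a * disc (b :: M) - disc M := rfl
    have hmono : disc (b :: M) + 1 ≤ disc (a :: b :: M) := hDc a ha
    have hDpos : (0:ℤ) < disc (b :: M) := by
      have : (0:ℤ) ≤ (M.length : ℤ) := Int.natCast_nonneg _
      simp only [List.length_cons] at hD1; push_cast at hD1; omega
    simp only [List.length_cons] at hD1 hDs ⊢
    push_cast at hD1 hDs ⊢
    refine ⟨⟨by omega, fun c hc => ?_⟩, ?_⟩
    · show a * disc (b :: M) - disc M + 1 ≤ c * disc (a :: b :: M) - disc (b :: M)
      rw [hdisc] at hmono ⊢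
      nlinarith [mul_le_mul_of_nonneg_right hc (le_of_lt (lt_of_lt_of_le (by omega : (0:ℤ) < disc (b :: M) + 1) (by omega : disc (b :: M) + 1 ≤ a * disc (b :: M) - disc M)))]
    · rintro ⟨x, hx, hx2⟩
      rw [hdisc]
      rcases List.mem_cons.mp hx with rfl | hx'
      · have ha3 : 3 ≤ x := by omega
        nlinarith [mul_le_mul_of_nonneg_right ha3 (le_of_lt hDpos)]
      · have hs := hDs ⟨x, hx', hx2⟩
        nlinarith [mul_le_mul_of_nonneg_right ha (le_of_lt hDpos)]

theorem disc_ge_length_add_one (L : List ℤ) (hL : ∀ a ∈ L, 2 ≤ a) :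
    (L.length : ℤ) + 1 ≤ disc L ∧
      (disc L = (L.length : ℤ) + 1 ↔ ∀ a ∈ L, a = 2) := by
  obtain ⟨⟨h1, _⟩, h2⟩ := disc_key L hL
  refine ⟨h1, ⟨fun heq => ?_, fun hall => disc_all2 L hall⟩⟩
  by_contra hc
  push_neg at hc
  have := h2 hc
  omega
end

section
/- Let L = [a_1, …, a_n] be a nonempty admissible list (every a_i ≥ 2), and define x ∈ ℚⁿ by x_i = d([a_{i+1}, …, a_n]) / d(L) (so x_n = 1/d(L)). Then M(L) · x equals the first standard basis vector e_1, and 0 < x_i < 1 for every i. (These x_i are the coefficients of the one-sided bark Bk'(T) of an admissible chain T.) -/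
lemma disc_cons_cons (a b : ℤ) (M : List ℤ) :
    disc (a :: b :: M) = a * disc (b :: M) - disc M := rfl

lemma disc_tail_lt (L : List ℤ) (h : ∀ a ∈ L, 2 ≤ a) (hne : L ≠ []) :
    0 < disc L.tail ∧ disc L.tail < disc L := by
  induction L with
  | nil => simp at hne
  | cons a M ih =>
    have ha := h a (by simp)
    cases M with
    | nil => simpa [disc] using by omega
    | cons b M' =>
      obtain ⟨h1, h2⟩ := ih (fun x hx => h x (by simp [hx])) (by simp)
      simp only [List.tail_cons] at *
      rw [disc_cons_cons]
      constructor
      · omega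
      · nlinarith

lemma disc_pos (L : List ℤ) (h : ∀ a ∈ L, 2 ≤ a) : 0 < disc L := by
  cases L with
  | nil => norm_num [disc]
  | cons a M =>
    obtain ⟨h1, h2⟩ := disc_tail_lt (a :: M) h (by simp)
    omega

lemma disc_drop_le (L : List ℤ) (h : ∀ a ∈ L, 2 ≤ a) (k : ℕ) :
    disc (L.drop k) ≤ disc L := by
  induction k with
  | zero => simp
  | succ k ih =>
    by_cases hk : L.drop k = []
    · have : L.drop (k + 1) = [] := by
        have := List.drop_eq_nil_iff.mp hk
        exact List.drop_eq_nil_iff.mpr (by omega)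
      rw [this, ← hk]
      exact ih
    · obtain ⟨h1, h2⟩ := disc_tail_lt (L.drop k)
        (fun x hx => h x (List.mem_of_mem_drop hx)) hk
      rw [List.tail_drop] at h2
      omega

lemma disc_drop_lt (L : List ℤ) (h : ∀ a ∈ L, 2 ≤ a) (k : ℕ) (hk : k < L.length) :
    disc (L.drop (k + 1)) < disc L := by
  have hne : L.drop k ≠ [] := by
    intro hc
    have := List.drop_eq_nil_iff.mp hc
    omega
  obtain ⟨h1, h2⟩ := disc_tail_lt (L.drop k)
    (fun x hx => h x (List.mem_of_mem_drop hx)) hne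
  rw [List.tail_drop] at h2
  have := disc_drop_le L h k
  omega

lemma disc_drop_rec (L : List ℤ) (i : ℕ) (h : i + 2 ≤ L.length) :
    disc (L.drop i) = L.get ⟨i, by omega⟩ * disc (L.drop (i + 1)) - disc (L.drop (i + 2)) := by
  rw [List.drop_eq_getElem_cons (show i < L.length by omega),
      List.drop_eq_getElem_cons (show i + 1 < L.length by omega), disc_cons_cons,
      ← List.drop_eq_getElem_cons (show i + 1 < L.length by omega)]
  rfl

lemma disc_drop_last (L : List ℤ) (i : ℕ) (h : i + 1 = L.length) :
    disc (L.drop i) = L.get ⟨i, by omega⟩ := by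
  rw [List.drop_eq_getElem_cons (show i < L.length by omega)]
  have : L.drop (i + 1) = [] := List.drop_eq_nil_iff.mpr (by omega)
  rw [this]
  rfl

theorem bark_coefficients (L : List ℤ) (hL : 0 < L.length) (hadm : ∀ a ∈ L, 2 ≤ a) :
    (chainMatrix L).mulVec
        (fun i => (disc (L.drop ((i : ℕ) + 1)) : ℚ) / (disc L : ℚ)) =
      Pi.single (⟨0, hL⟩ : Fin L.length) 1 ∧
    ∀ i : Fin L.length,
      0 < (disc (L.drop ((i : ℕ) + 1)) : ℚ) / (disc L : ℚ) ∧
        (disc (L.drop ((i : ℕ) + 1)) : ℚ) / (disc L : ℚ) < 1 := by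
  set n := L.length with hn
  have hD : (0 : ℤ) < disc L := disc_pos L hadm
  have hDQ : (disc L : ℚ) ≠ 0 := by exact_mod_cast hD.ne'
  have hpos : ∀ i : Fin n, (0 : ℚ) < (disc (L.drop ((i : ℕ) + 1)) : ℚ) / (disc L : ℚ) := by
    intro i
    have h1 : 0 < disc (L.drop ((i : ℕ) + 1)) :=
      disc_pos _ (fun x hx => hadm x (List.mem_of_mem_drop hx))
    apply div_pos (by exact_mod_cast h1) (by exact_mod_cast hD)
  have hlt1 : ∀ i : Fin n, (disc (L.drop ((i : ℕ) + 1)) : ℚ) / (disc L : ℚ) < 1 := by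
    intro i
    rw [div_lt_one (by exact_mod_cast hD)]
    exact_mod_cast disc_drop_lt L hadm i i.isLt
  refine ⟨?_, fun i => ⟨hpos i, hlt1 i⟩⟩
  funext i
  set x : Fin n → ℚ := fun j => (disc (L.drop ((j : ℕ) + 1)) : ℚ) / (disc L : ℚ) with hx
  have hsplit : ∀ j : Fin n, chainMatrix L i j * x j =
      (if j = i then (L.get i : ℚ) * x i else 0) +
      ((if (j : ℕ) = (i : ℕ) + 1 then -x j else 0) +
       (if (j : ℕ) + 1 = (i : ℕ) then -x j else 0)) := by
    intro j
    simp only [chainMatrix, Matrix.of_apply]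
    rcases eq_or_ne i j with rfl | hij
    · have h1 : ¬((i : ℕ) = (i : ℕ) + 1) := by omega
      have h2 : ¬((i : ℕ) + 1 = (i : ℕ)) := by omega
      simp [h1, h2]
    · rw [if_neg hij]
      rcases eq_or_ne ((j : ℕ)) ((i : ℕ) + 1) with h1 | h1
      · rw [if_pos (Or.inl h1.symm), if_neg (fun hc => hij hc.symm), if_pos h1,
          if_neg (by omega : ¬((j : ℕ) + 1 = (i : ℕ)))]
        ring
      · rcases eq_or_ne ((j : ℕ) + 1) ((i : ℕ)) with h2 | h2
        · rw [if_pos (Or.inr h2), if_neg (fun hc => hij hc.symm), if_neg h1, if_pos h2]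
          ring
        · rw [if_neg (by omega : ¬((i : ℕ) + 1 = (j : ℕ) ∨ (j : ℕ) + 1 = (i : ℕ))),
            if_neg (fun hc => hij hc.symm), if_neg h1, if_neg h2]
          ring
  have hmv : (chainMatrix L).mulVec x i =
      (L.get i : ℚ) * x i +
      ((if h : (i : ℕ) + 1 < n then -x ⟨(i : ℕ) + 1, h⟩ else 0) +
       (if h : 0 < (i : ℕ) then -x ⟨(i : ℕ) - 1, by omega⟩ else 0)) := by
    rw [Matrix.mulVec, dotProduct]
    rw [Finset.sum_congr rfl (fun j _ => hsplit j), Finset.sum_add_distrib,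
      Finset.sum_add_distrib]
    congr 1
    · simp [Finset.sum_ite_eq]
    congr 1
    · by_cases h : (i : ℕ) + 1 < n
      · have hfun : (fun j : Fin n => if (j : ℕ) = (i : ℕ) + 1 then -x j else 0) =
            (fun j : Fin n => if j = ⟨(i : ℕ) + 1, h⟩ then -x j else 0) := by
          funext j
          exact if_congr (by rw [Fin.ext_iff]) rfl rfl
        rw [dif_pos h, hfun]
        simp [Finset.sum_ite_eq']
      · rw [dif_neg h]
        apply Finset.sum_eq_zero
        intro j _
        rw [if_neg (by omega)]
    · by_cases h : 0 < (i : ℕ)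
      · have hfun : (fun j : Fin n => if (j : ℕ) + 1 = (i : ℕ) then -x j else 0) =
            (fun j : Fin n => if j = ⟨(i : ℕ) - 1, by omega⟩ then -x j else 0) := by
          funext j
          exact if_congr (by rw [Fin.ext_iff]; simp only [Fin.val_mk]; omega) rfl rfl
        rw [dif_pos h, hfun]
        simp [Finset.sum_ite_eq']
      · rw [dif_neg h]
        apply Finset.sum_eq_zero
        intro j _
        rw [if_neg (by omega)]
  show (chainMatrix L).mulVec x i = _
  rw [hmv, Pi.single_apply]
  rcases eq_or_ne (i : ℕ) 0 with h0 | h0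
  · rw [if_pos (Fin.ext (by simpa using h0))]
    have hdrop0 : L.drop (i : ℕ) = L := by rw [h0, List.drop_zero]
    by_cases h1 : (i : ℕ) + 1 < n
    · rw [dif_pos h1, dif_neg (show ¬ 0 < (i : ℕ) by omega)]
      have key := disc_drop_rec L (i : ℕ) (by omega)
      simp only [Fin.eta, hdrop0] at key
      have keyQ : (disc L : ℚ) =
          (L.get i : ℚ) * (disc (L.drop ((i : ℕ) + 1)) : ℚ)
            - (disc (L.drop ((i : ℕ) + 1 + 1)) : ℚ) := by
        rw [show (i : ℕ) + 1 + 1 = (i : ℕ) + 2 from rfl]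
        exact_mod_cast key
      simp only [hx, Fin.val_mk]
      field_simp
      linear_combination (-1 : ℚ) * keyQ
    · rw [dif_neg h1, dif_neg (show ¬ 0 < (i : ℕ) by omega)]
      have key := disc_drop_last L (i : ℕ) (by omega)
      simp only [Fin.eta, hdrop0] at key
      have keyQ : (disc L : ℚ) = (L.get i : ℚ) := by exact_mod_cast key
      have h2 : L.drop ((i : ℕ) + 1) = [] := List.drop_eq_nil_iff.mpr (by omega)
      simp only [hx, h2, show disc [] = 1 from rfl]
      push_cast
      field_simp
      linear_combination (-1 : ℚ) * keyQ
  · rw [if_neg (by simp [Fin.ext_iff]; omega)]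
    have hi1 : (i : ℕ) - 1 + 1 = (i : ℕ) := by omega
    by_cases h1 : (i : ℕ) + 1 < n
    · rw [dif_pos h1, dif_pos (show 0 < (i : ℕ) by omega)]
      have key := disc_drop_rec L (i : ℕ) (by omega)
      simp only [Fin.eta] at key
      have keyQ : (disc (L.drop (i : ℕ)) : ℚ) =
          (L.get i : ℚ) * (disc (L.drop ((i : ℕ) + 1)) : ℚ)
            - (disc (L.drop ((i : ℕ) + 1 + 1)) : ℚ) := by
        rw [show (i : ℕ) + 1 + 1 = (i : ℕ) + 2 from rfl]
        exact_mod_cast key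
      simp only [hx, Fin.val_mk, hi1]
      linear_combination (-1 / (disc L : ℚ)) * keyQ
    · rw [dif_neg h1, dif_pos (show 0 < (i : ℕ) by omega)]
      have key := disc_drop_last L (i : ℕ) (by omega)
      simp only [Fin.eta] at key
      have keyQ : (disc (L.drop (i : ℕ)) : ℚ) = (L.get i : ℚ) := by exact_mod_cast key
      have h2 : L.drop ((i : ℕ) + 1) = [] := List.drop_eq_nil_iff.mpr (by omega)
      simp only [hx, Fin.val_mk, hi1, h2, show disc [] = 1 from rfl]
      push_cast
      linear_combination (-1 / (disc L : ℚ)) * keyQ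
end

section
/- For every nonempty admissible list L (every entry ≥ 2), d'(L) + d'(L.reverse) + 2 ≤ 2 · d(L), and equality holds if and only if every entry of L equals 2. (This is the statement that the bark of an admissible chain T satisfies Bk²(T) = −(d'(T) + d'(Tᵗ) + 2)/d(T) ≥ −2, with equality exactly for chains of (−2)-curves.) -/
lemma disc_cat (L : List ℤ) (a b : ℤ) :
    disc (L ++ [a, b]) = b * disc (L ++ [a]) - disc L := by
  induction L using disc.induct with
  | case1 => simp [disc]; ring
  | case2 x => simp [disc]; ring
  | case3 x y M ih1 ih2 =>
      simp only [List.cons_append, List.append_eq, disc] at *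
      rw [ih1, ih2]; ring

lemma disc_reverse_s8 (L : List ℤ) : disc L.reverse = disc L := by
  induction L using disc.induct with
  | case1 => rfl
  | case2 x => rfl
  | case3 x y M ih1 ih2 =>
      have h : (x :: y :: M).reverse = M.reverse ++ [y, x] := by simp
      rw [h, disc_cat]
      have h2 : (y :: M).reverse = M.reverse ++ [y] := by simp
      rw [← h2, ih1, ih2]
      simp [disc]

lemma disc_key_s8 (L : List ℤ) (hadm : ∀ x ∈ L, 2 ≤ x) :
    1 ≤ disc L ∧ (L ≠ [] →
      disc L.tail + 1 ≤ disc L ∧ (disc L.tail + 1 = disc L ↔ ∀ x ∈ L, x = 2)) := by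
  induction L using disc.induct with
  | case1 => exact ⟨le_refl 1, by tauto⟩
  | case2 a =>
      have ha : 2 ≤ a := hadm a (by simp)
      refine ⟨by simp only [disc]; linarith, fun _ => ⟨by simpa [disc] using ha, ?_⟩⟩
      simp [disc]
      constructor
      · intro h; linarith
      · intro h; omega
  | case3 a b M ih1 ih2 =>
      have ha : 2 ≤ a := hadm a (by simp)
      have hadm1 : ∀ x ∈ b :: M, 2 ≤ x := fun x hx => hadm x (by simp [hx])
      have hadm2 : ∀ x ∈ M, 2 ≤ x := fun x hx => hadm x (by simp [hx])
      obtain ⟨hpos1, h1⟩ := ih1 hadm1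
      obtain ⟨hpos2, -⟩ := ih2 hadm2
      obtain ⟨hle, hiff⟩ := h1 (by simp)
      simp only [List.tail_cons] at hle hiff ⊢
      have hd : disc (a :: b :: M) = a * disc (b :: M) - disc M := by simp [disc]
      refine ⟨by nlinarith, fun _ => ⟨by nlinarith, ?_⟩⟩
      constructor
      · intro h
        rw [hd] at h
        have h0 : 0 ≤ (a - 2) * disc (b :: M) := mul_nonneg (by linarith) (by linarith)
        have h0' : (a - 2) * disc (b :: M) ≤ 0 := by nlinarith
        have hz : (a - 2) * disc (b :: M) = 0 := le_antisymm h0' h0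
        have ha2 : a = 2 := by
          rcases mul_eq_zero.mp hz with h' | h'
          · linarith
          · linarith
        have hM : disc M + 1 = disc (b :: M) := by
          rw [ha2] at h; linarith
        intro x hx
        rcases List.mem_cons.mp hx with rfl | hx'
        · exact ha2
        · exact (hiff.mp hM) x hx'
      · intro h
        have ha2 : a = 2 := h a (by simp)
        have hM : disc M + 1 = disc (b :: M) :=
          hiff.mpr (fun x hx => h x (by simp [hx]))
        rw [hd, ha2]; linarith

lemma disc'_eq (L : List ℤ) (h : L ≠ []) : disc' L = disc L.tail := by
  cases L with
  | nil => exact absurd rfl h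
  | cons a M => simp [disc']

theorem bark_sq_ge_neg_two (L : List ℤ) (hne : L ≠ []) (hadm : ∀ a ∈ L, 2 ≤ a) :
    disc' L + disc' L.reverse + 2 ≤ 2 * disc L ∧
      (disc' L + disc' L.reverse + 2 = 2 * disc L ↔ ∀ a ∈ L, a = 2) := by
  have hadmr : ∀ x ∈ L.reverse, 2 ≤ x := fun x hx => hadm x (List.mem_reverse.mp hx)
  obtain ⟨-, h1⟩ := disc_key_s8 L hadm
  obtain ⟨-, h2⟩ := disc_key_s8 L.reverse hadmr
  obtain ⟨hle1, hiff1⟩ := h1 hne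
  obtain ⟨hle2, hiff2⟩ := h2 (by simpa using hne)
  rw [disc_reverse_s8] at hle2 hiff2
  rw [disc'_eq L hne, disc'_eq L.reverse (by simpa using hne)]
  refine ⟨by linarith, ?_, ?_⟩
  · intro h
    exact hiff1.mp (by linarith)
  · intro h
    have e1 := hiff1.mpr h
    have e2 := hiff2.mpr (fun x hx => h x (List.mem_reverse.mp hx))
    linarith
end

section
/- For an admissible list L (every entry ≥ 2), d(L) − d'(L) = 2 if and only if L = [2, 2, …, 2, 3], i.e. L consists of k ≥ 0 entries equal to 2 followed by a single entry equal to 3. (This is the case α = 2 of the equation e(R) + α/d(R) = 1 for an oriented admissible chain R.) -/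
theorem disc_bounds : ∀ L : List ℤ, (∀ a ∈ L, 2 ≤ a) →
    1 ≤ disc L ∧ disc' L + 1 ≤ disc L
  | [] => fun _ => by simp [disc, disc']
  | [a] => fun h => by
      have := h a (by simp)
      simp [disc, disc']
      omega
  | a :: b :: M => fun h => by
      have ha := h a (by simp)
      have ih := disc_bounds (b :: M) (fun x hx => h x (List.mem_cons_of_mem _ hx))
      simp only [disc, disc'] at *
      constructor <;> nlinarith [ih.1, ih.2]

theorem disc_fwd : ∀ L : List ℤ, (∀ a ∈ L, 2 ≤ a) → disc L - disc' L = 2 →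
    ∃ k : ℕ, L = List.replicate k (2 : ℤ) ++ [3]
  | [] => fun _ h => by simp [disc, disc'] at h
  | [a] => fun _ h => by
      simp [disc, disc'] at h
      exact ⟨0, by simp; omega⟩
  | a :: b :: M => fun hadm h => by
      have ha := hadm a (by simp)
      have hM : ∀ x ∈ b :: M, 2 ≤ x := fun x hx => hadm x (List.mem_cons_of_mem _ hx)
      have hb := disc_bounds (b :: M) hM
      have hM0 : 1 ≤ disc M := (disc_bounds M (fun x hx => hM x (List.mem_cons_of_mem _ hx))).1
      simp only [disc, disc'] at h hb
      have ha2 : a = 2 := by nlinarith [hb.1, hb.2]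
      subst ha2
      obtain ⟨k, hk⟩ := disc_fwd (b :: M) hM (by simp only [disc, disc']; linarith)
      exact ⟨k + 1, by rw [List.replicate_succ, List.cons_append, hk]⟩

theorem disc_bwd : ∀ k : ℕ, disc (List.replicate k (2 : ℤ) ++ [3]) -
    disc' (List.replicate k (2 : ℤ) ++ [3]) = 2
  | 0 => by simp [disc, disc']
  | k + 1 => by
      have ih := disc_bwd k
      rw [List.replicate_succ, List.cons_append]
      cases k with
      | zero => simp [disc, disc']
      | succ n =>
        rw [List.replicate_succ, List.cons_append] at *
        simp only [disc, disc'] at *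
        linarith

theorem disc_sub_disc'_eq_two (L : List ℤ) (hL : ∀ a ∈ L, 2 ≤ a) :
    disc L - disc' L = 2 ↔ ∃ k : ℕ, L = List.replicate k (2 : ℤ) ++ [3] := by
  constructor
  · exact disc_fwd L hL
  · rintro ⟨k, rfl⟩
    exact disc_bwd k
end

section
/- For all integers c ≥ p ≥ 1, the sum of the entries of the multiplicity list μ(c, p) equals c + p − gcd(c, p). -/
/-- The multiplicity list `μ(c, p)` of a Hamburger–Noether pair `(c, p)` with `c ≥ p ≥ 1`:
`μ(c, p) = [p]` if `c = p`, and `μ(c, p) = p :: μ(max (c−p) p, min (c−p) p)` if `c > p`.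
(For inputs outside the intended domain `c ≥ p ≥ 1` we return `[p]`.) -/
def muList (c p : ℤ) : List ℤ :=
  if h : c ≤ p ∨ p ≤ 0 then [p]
  else p :: muList (max (c - p) p) (min (c - p) p)
termination_by c.toNat
decreasing_by
  rw [not_or, not_le, not_le] at h
  rcases le_total (c - p) p with h' | h'
  · rw [max_eq_right h']; omega
  · rw [max_eq_left h']; omega

lemma Int.gcd_sub_self_left' (c p : ℤ) (hp : 0 ≤ p) (hpc : p ≤ c) :
    Int.gcd (c - p) p = Int.gcd c p := by
  unfold Int.gcd
  have h : (c - p).natAbs = c.natAbs - p.natAbs := by omega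
  rw [h, Nat.gcd_sub_self_left (by omega)]

theorem muList_sum (c p : ℤ) (hp : 1 ≤ p) (hpc : p ≤ c) :
    (muList c p).sum = c + p - (Int.gcd c p : ℤ) := by
  suffices H : ∀ n : ℕ, ∀ c p : ℤ, 1 ≤ p → p ≤ c → c.toNat = n →
      (muList c p).sum = c + p - (Int.gcd c p : ℤ) from H c.toNat c p hp hpc rfl
  intro n
  induction n using Nat.strong_induction_on with
  | _ n ih =>
    intro c p hp hpc hn
    rw [muList]
    by_cases h : c ≤ p ∨ p ≤ 0
    · rw [dif_pos h]
      have hcp : c = p := by omega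
      subst hcp
      simp only [List.sum_singleton, Int.gcd_self]
      rw [Int.natAbs_of_nonneg (by omega)]
      ring
    · rw [dif_neg h]
      push_neg at h
      obtain ⟨h1, h2⟩ := h
      have key : (muList (max (c - p) p) (min (c - p) p)).sum
          = max (c - p) p + min (c - p) p - (Int.gcd (max (c - p) p) (min (c - p) p) : ℤ) := by
        rcases le_total (c - p) p with h' | h'
        · rw [max_eq_right h', min_eq_left h']
          exact ih p.toNat (by omega) p (c - p) (by omega) h' rfl
        · rw [max_eq_left h', min_eq_right h']
          exact ih (c - p).toNat (by omega) (c - p) p hp h' rfl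
      rw [List.sum_cons, key]
      have hgcd : Int.gcd (max (c - p) p) (min (c - p) p) = Int.gcd c p := by
        rcases le_total (c - p) p with h' | h'
        · rw [max_eq_right h', min_eq_left h', Int.gcd_comm,
            Int.gcd_sub_self_left' c p (by omega) hpc]
        · rw [max_eq_left h', min_eq_right h',
            Int.gcd_sub_self_left' c p (by omega) hpc]
      rw [hgcd]
      rcases le_total (c - p) p with h' | h'
      · rw [max_eq_right h', min_eq_left h']; ring
      · rw [max_eq_left h', min_eq_right h']; ring
end
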